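/- In any nonempty RANS R, the center vertex is adjacent to all three outermost vertices, and every internal vertex of the sub-RANS S_i(R) has distance at least 2 to the opposite outermost vertex O_i(R), with distance exactly 1 + d(w, O(S_i(R))) where O(S_i(R)) is the set of outermost vertices of S_i(R). -/

import Mathlib

/-- Rooted plane ternary trees, modeling RANS. -/
inductive Tern : Type
  | leaf : Tern
  | node : Tern → Tern → Tern → Tern

/-- Internal vertices (positions of internal nodes) of a RANS. -/
def Pos : Tern → Type
  | .leaf => Empty
  | .node a b c => Unit ⊕ (Pos a ⊕ (Pos b ⊕ Pos c))

/-- Vertices of a RANS: the three outermost vertices plus the internal ones. -/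
def Vtx (t : Tern) : Type := Fin 3 ⊕ Pos t

/-- Embedding of the first sub-RANS: its outermost vertices are the center
and `O₂, O₃`. -/
def emb1 {a b c : Tern} : Vtx a → Vtx (Tern.node a b c) := fun x =>
  match x with
  | .inl i => if i = 0 then .inr (.inl ()) else .inl i
  | .inr p => .inr (.inr (.inl p))

/-- Embedding of the second sub-RANS: its outermost vertices are `O₁`, the
center and `O₃`. -/
def emb2 {a b c : Tern} : Vtx b → Vtx (Tern.node a b c) := fun x =>
  match x with
  | .inl i => if i = 1 then .inr (.inl ()) else .inl i
  | .inr p => .inr (.inr (.inr (.inl p)))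

/-- Embedding of the third sub-RANS: its outermost vertices are `O₁, O₂` and
the center. -/
def emb3 {a b c : Tern} : Vtx c → Vtx (Tern.node a b c) := fun x =>
  match x with
  | .inl i => if i = 2 then .inr (.inl ()) else .inl i
  | .inr p => .inr (.inr (.inr (.inr p)))

/-- Adjacency in a RANS: the empty RANS is the triangle on the outermost
vertices; a nonempty RANS is the union of its three sub-RANS glued along the
sub-triangles. -/
def ransRel : (t : Tern) → Vtx t → Vtx t → Prop
  | .leaf => fun x y => x ≠ y
  | .node a b c => fun x y =>
      (∃ p q, ransRel a p q ∧ emb1 p = x ∧ emb1 q = y) ∨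
      (∃ p q, ransRel b p q ∧ emb2 p = x ∧ emb2 q = y) ∨
      (∃ p q, ransRel c p q ∧ emb3 p = x ∧ emb3 q = y)

/-- The graph of a RANS. -/
def ransGraph (t : Tern) : SimpleGraph (Vtx t) := SimpleGraph.fromRel (ransRel t)

/-! The center is `emb1 O₁`, `emb2 O₂`, `emb3 O₃`, so it and the two other outermost vertices
are joined to `Oᵢ`; going through the outermost vertex of `Sᵢ` closest to `w` gives the upper
bound `1 + d(w, O(Sᵢ))`. For the lower bound, the function equal to `1 + d(·, O(Sᵢ))` on `Sᵢ`,
to `0` at `Oᵢ` and to `1` everywhere else changes by at most one along every edge: the edges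
outside `Sᵢ` lie in the other two sub-RANS, which avoid the interior of `Sᵢ` and on which it only
takes the values `0` and `1`. -/

namespace SimpleGraph

variable {V W : Type*} {G : SimpleGraph V} {u v : V}

def fromRelHom {r : V → V → Prop} {s : W → W → Prop} (f : V → W) (hf : f.Injective)
    (h : ∀ x y, r x y → s (f x) (f y)) : fromRel r →g fromRel s where
  toFun := f
  map_rel' {x y} hxy := by
    obtain ⟨hne, hr | hr⟩ := (fromRel_adj _ x y).mp hxy
    · exact (fromRel_adj _ _ _).mpr ⟨hf.ne hne, .inl (h x y hr)⟩
    · exact (fromRel_adj _ _ _).mpr ⟨hf.ne hne, .inr (h y x hr)⟩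

lemma Walk.le_add_length {f : V → ℕ} (hf : ∀ ⦃x y⦄, G.Adj x y → f x ≤ f y + 1) :
    ∀ {u v : V} (p : G.Walk u v), f u ≤ f v + p.length
  | _, _, .nil => by simp
  | _, _, .cons h p => by
    have := p.le_add_length hf
    have := hf h
    rw [Walk.length_cons]
    omega

lemma Reachable.le_add_dist {f : V → ℕ} (hf : ∀ ⦃x y⦄, G.Adj x y → f x ≤ f y + 1)
    (h : G.Reachable u v) : f u ≤ f v + G.dist u v := by
  obtain ⟨p, hp⟩ := h.exists_walk_length_eq_dist
  exact hp ▸ p.le_add_length hf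

lemma Reachable.dist_map_le {G' : SimpleGraph W} (φ : G →g G') (h : G.Reachable u v) :
    G'.dist (φ u) (φ v) ≤ G.dist u v := by
  obtain ⟨p, hp⟩ := h.exists_walk_length_eq_dist
  calc G'.dist (φ u) (φ v) ≤ (p.map φ).length := dist_le _
    _ = G.dist u v := by rw [Walk.length_map, hp]

noncomputable def distToTriple (G : SimpleGraph V) (O : Fin 3 → V) (x : V) : ℕ :=
  min (G.dist x (O 0)) (min (G.dist x (O 1)) (G.dist x (O 2)))

variable {O : Fin 3 → V}

lemma distToTriple_self (j : Fin 3) : G.distToTriple O (O j) = 0 := by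
  fin_cases j <;> simp [distToTriple]

lemma Adj.distToTriple_le (h : G.Adj u v) : G.distToTriple O u ≤ G.distToTriple O v + 1 := by
  have step (j : Fin 3) : G.dist u (O j) ≤ G.dist v (O j) + 1 := by
    have := h.reachable.dist_triangle_left (O j)
    rw [dist_eq_one_iff_adj.mpr h] at this
    omega
  have := step 0; have := step 1; have := step 2
  unfold distToTriple
  omega

lemma Connected.distToTriple_pos (hG : G.Connected) {x : V} (hx : ∀ j, x ≠ O j) :
    0 < G.distToTriple O x := by
  have pos (j : Fin 3) := hG.pos_dist_of_ne (hx j)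
  have := pos 0; have := pos 1; have := pos 2
  unfold distToTriple
  omega

lemma Connected.dist_eq_one_add_distToTriple {H : SimpleGraph W} (hG : G.Connected)
    (φ : G →g H) {o : W} (ho : ∀ j, H.Adj (φ (O j)) o) {f : W → ℕ}
    (hf : ∀ ⦃x y⦄, H.Adj x y → f x ≤ f y + 1) (hfφ : ∀ x, f (φ x) = 1 + G.distToTriple O x)
    (hfo : f o = 0) (x : V) :
    H.dist (φ x) o = 1 + G.distToTriple O x := by
  have upper (j : Fin 3) : H.dist (φ x) o ≤ 1 + G.dist x (O j) := by
    have := (ho j).reachable.dist_triangle_right (φ x)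
    rw [dist_eq_one_iff_adj.mpr (ho j)] at this
    have := (hG.preconnected x (O j)).dist_map_le φ
    omega
  have lower : f (φ x) ≤ f o + H.dist (φ x) o :=
    (((hG.preconnected x (O 0)).map φ).trans (ho 0).reachable).le_add_dist hf
  have := upper 0; have := upper 1; have := upper 2
  rw [hfφ, hfo] at lower
  unfold distToTriple at *
  omega

end SimpleGraph

open SimpleGraph

section Embeddings

variable {a b c : Tern}

lemma emb1_injective : Function.Injective (emb1 : Vtx a → Vtx (.node a b c)) := by
  rintro (i | p) (j | q) h <;> simp only [emb1] at h <;> grind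

lemma emb2_injective : Function.Injective (emb2 : Vtx b → Vtx (.node a b c)) := by
  rintro (i | p) (j | q) h <;> simp only [emb2] at h <;> grind

lemma emb3_injective : Function.Injective (emb3 : Vtx c → Vtx (.node a b c)) := by
  rintro (i | p) (j | q) h <;> simp only [emb3] at h <;> grind

def emb1Hom : ransGraph a →g ransGraph (.node a b c) :=
  fromRelHom emb1 emb1_injective fun x y h => Or.inl ⟨x, y, h, rfl, rfl⟩

def emb2Hom : ransGraph b →g ransGraph (.node a b c) :=
  fromRelHom emb2 emb2_injective fun x y h => Or.inr (Or.inl ⟨x, y, h, rfl, rfl⟩)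

def emb3Hom : ransGraph c →g ransGraph (.node a b c) :=
  fromRelHom emb3 emb3_injective fun x y h => Or.inr (Or.inr ⟨x, y, h, rfl, rfl⟩)

lemma ransGraph_adj_emb1 {x y : Vtx a} (h : (ransGraph a).Adj x y) :
    (ransGraph (.node a b c)).Adj (emb1 x) (emb1 y) :=
  emb1Hom.map_adj h

lemma ransGraph_adj_emb2 {x y : Vtx b} (h : (ransGraph b).Adj x y) :
    (ransGraph (.node a b c)).Adj (emb2 x) (emb2 y) :=
  emb2Hom.map_adj h

lemma ransGraph_adj_emb3 {x y : Vtx c} (h : (ransGraph c).Adj x y) :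
    (ransGraph (.node a b c)).Adj (emb3 x) (emb3 y) :=
  emb3Hom.map_adj h

lemma emb1_inl_of_ne {i : Fin 3} (h : i ≠ 0) : (emb1 (.inl i) : Vtx (.node a b c)) = .inl i :=
  if_neg h

lemma emb2_inl_of_ne {i : Fin 3} (h : i ≠ 1) : (emb2 (.inl i) : Vtx (.node a b c)) = .inl i :=
  if_neg h

lemma emb3_inl_of_ne {i : Fin 3} (h : i ≠ 2) : (emb3 (.inl i) : Vtx (.node a b c)) = .inl i :=
  if_neg h

end Embeddings

lemma ransGraph_adj_inl : ∀ {t : Tern} {i j : Fin 3}, i ≠ j →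
    (ransGraph t).Adj (.inl i) (.inl j)
  | .leaf, _, _, hij =>
    have hne : (.inl _ : Vtx .leaf) ≠ .inl _ := Sum.inl_injective.ne hij
    (fromRel_adj _ _ _).mpr ⟨hne, .inl hne⟩
  | .node a b c, i, j, hij => by
    by_cases h0 : i ≠ 0 ∧ j ≠ 0
    · have := ransGraph_adj_emb1 (b := b) (c := c) (ransGraph_adj_inl (t := a) hij)
      rwa [emb1_inl_of_ne h0.1, emb1_inl_of_ne h0.2] at this
    by_cases h1 : i ≠ 1 ∧ j ≠ 1
    · have := ransGraph_adj_emb2 (a := a) (c := c) (ransGraph_adj_inl (t := b) hij)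
      rwa [emb2_inl_of_ne h1.1, emb2_inl_of_ne h1.2] at this
    have h2 : i ≠ 2 ∧ j ≠ 2 := by omega
    have := ransGraph_adj_emb3 (a := a) (b := b) (ransGraph_adj_inl (t := c) hij)
    rwa [emb3_inl_of_ne h2.1, emb3_inl_of_ne h2.2] at this

section Node

variable {a b c : Tern}

lemma ransGraph_adj_center_inl (i : Fin 3) :
    (ransGraph (.node a b c)).Adj (.inr (.inl ())) (.inl i) := by
  by_cases hi : i = 0
  · subst hi
    exact ransGraph_adj_emb2 (ransGraph_adj_inl (t := b) (by decide : (1 : Fin 3) ≠ 0))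
  · have := ransGraph_adj_emb1 (b := b) (c := c) (ransGraph_adj_inl (t := a) (Ne.symm hi))
    rwa [emb1_inl_of_ne hi] at this

lemma ransGraph_adj_emb1_inl (j : Fin 3) :
    (ransGraph (.node a b c)).Adj (emb1 (.inl j)) (.inl 0) := by
  by_cases hj : j = 0
  · subst hj
    exact ransGraph_adj_center_inl 0
  · rw [emb1_inl_of_ne hj]
    exact ransGraph_adj_inl hj

lemma ransGraph_adj_emb2_inl (j : Fin 3) :
    (ransGraph (.node a b c)).Adj (emb2 (.inl j)) (.inl 1) := by
  by_cases hj : j = 1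
  · subst hj
    exact ransGraph_adj_center_inl 1
  · rw [emb2_inl_of_ne hj]
    exact ransGraph_adj_inl hj

lemma ransGraph_adj_emb3_inl (j : Fin 3) :
    (ransGraph (.node a b c)).Adj (emb3 (.inl j)) (.inl 2) := by
  by_cases hj : j = 2
  · subst hj
    exact ransGraph_adj_center_inl 2
  · rw [emb3_inl_of_ne hj]
    exact ransGraph_adj_inl hj

end Node

theorem ransGraph_connected : ∀ t : Tern, (ransGraph t).Connected
  | .leaf => by
    refine (connected_iff_exists_forall_reachable _).mpr ⟨.inl 0, fun y => ?_⟩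
    by_cases h : .inl 0 = y
    · exact h ▸ .rfl
    · exact ((fromRel_adj _ _ y).mpr ⟨h, .inl h⟩).reachable
  | .node a b c => by
    refine (connected_iff_exists_forall_reachable _).mpr ⟨.inr (.inl ()), ?_⟩
    rintro (i | ⟨⟩ | p | p | p)
    · exact (ransGraph_adj_center_inl i).reachable
    · exact .rfl
    · exact ((ransGraph_connected a).preconnected (.inl 0) (.inr p)).map emb1Hom
    · exact ((ransGraph_connected b).preconnected (.inl 1) (.inr p)).map emb2Hom
    · exact ((ransGraph_connected c).preconnected (.inl 2) (.inr p)).map emb3Hom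

section Potential

variable {a b c : Tern}

lemma ransGraph_node_le_add_one_of_adj {f : Vtx (.node a b c) → ℕ}
    (h1 : ∀ ⦃x y⦄, (ransGraph a).Adj x y → f (emb1 x) ≤ f (emb1 y) + 1)
    (h2 : ∀ ⦃x y⦄, (ransGraph b).Adj x y → f (emb2 x) ≤ f (emb2 y) + 1)
    (h3 : ∀ ⦃x y⦄, (ransGraph c).Adj x y → f (emb3 x) ≤ f (emb3 y) + 1)
    ⦃u v : Vtx (.node a b c)⦄ (huv : (ransGraph (.node a b c)).Adj u v) : f u ≤ f v + 1 := by
  have of_rel : ∀ ⦃u v⦄, u ≠ v → ransRel (.node a b c) u v → f u ≤ f v + 1 ∧ f v ≤ f u + 1 := by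
    rintro _ _ hne (⟨x, y, h, rfl, rfl⟩ | ⟨x, y, h, rfl, rfl⟩ | ⟨x, y, h, rfl, rfl⟩)
    · have hxy : (ransGraph a).Adj x y := (fromRel_adj _ x y).mpr ⟨ne_of_apply_ne _ hne, .inl h⟩
      exact ⟨h1 hxy, h1 hxy.symm⟩
    · have hxy : (ransGraph b).Adj x y := (fromRel_adj _ x y).mpr ⟨ne_of_apply_ne _ hne, .inl h⟩
      exact ⟨h2 hxy, h2 hxy.symm⟩
    · have hxy : (ransGraph c).Adj x y := (fromRel_adj _ x y).mpr ⟨ne_of_apply_ne _ hne, .inl h⟩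
      exact ⟨h3 hxy, h3 hxy.symm⟩
  obtain ⟨hne, h | h⟩ := (fromRel_adj _ u v).mp huv
  exacts [(of_rel hne h).1, (of_rel hne.symm h).2]

noncomputable def potential1 : Vtx (.node a b c) → ℕ
  | .inl i => if i = 0 then 0 else 1
  | .inr (.inr (.inl p)) => 1 + distToTriple (ransGraph a) Sum.inl (.inr p)
  | .inr _ => 1

noncomputable def potential2 : Vtx (.node a b c) → ℕ
  | .inl i => if i = 1 then 0 else 1
  | .inr (.inr (.inr (.inl p))) => 1 + distToTriple (ransGraph b) Sum.inl (.inr p)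
  | .inr _ => 1

noncomputable def potential3 : Vtx (.node a b c) → ℕ
  | .inl i => if i = 2 then 0 else 1
  | .inr (.inr (.inr (.inr p))) => 1 + distToTriple (ransGraph c) Sum.inl (.inr p)
  | .inr _ => 1

lemma potential1_emb1 (x : Vtx a) :
    potential1 (emb1 x : Vtx (.node a b c)) = 1 + distToTriple (ransGraph a) Sum.inl x := by
  rcases x with i | p
  · have := distToTriple_self (G := ransGraph a) (O := Sum.inl) i
    fin_cases i <;> simp_all [potential1, emb1]
  · rfl

lemma potential2_emb2 (x : Vtx b) :
    potential2 (emb2 x : Vtx (.node a b c)) = 1 + distToTriple (ransGraph b) Sum.inl x := by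
  rcases x with i | p
  · have := distToTriple_self (G := ransGraph b) (O := Sum.inl) i
    fin_cases i <;> simp_all [potential2, emb2]
  · rfl

lemma potential3_emb3 (x : Vtx c) :
    potential3 (emb3 x : Vtx (.node a b c)) = 1 + distToTriple (ransGraph c) Sum.inl x := by
  rcases x with i | p
  · have := distToTriple_self (G := ransGraph c) (O := Sum.inl) i
    fin_cases i <;> simp_all [potential3, emb3]
  · rfl

lemma potential1_le_add_one_of_adj :
    ∀ ⦃u v⦄, (ransGraph (.node a b c)).Adj u v → potential1 u ≤ potential1 v + 1 := by
  have le_one_emb2 (x : Vtx b) : potential1 (emb2 x : Vtx (.node a b c)) ≤ 1 := by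
    rcases x with i | p <;> [fin_cases i; skip] <;> simp [potential1, emb2]
  have le_one_emb3 (x : Vtx c) : potential1 (emb3 x : Vtx (.node a b c)) ≤ 1 := by
    rcases x with i | p <;> [fin_cases i; skip] <;> simp [potential1, emb3]
  refine ransGraph_node_le_add_one_of_adj (fun x y h => ?_) (fun x y _ => ?_) (fun x y _ => ?_)
  · rw [potential1_emb1, potential1_emb1, add_assoc, add_le_add_iff_left]
    exact h.distToTriple_le
  · have := le_one_emb2 x; omega
  · have := le_one_emb3 x; omega

lemma potential2_le_add_one_of_adj :
    ∀ ⦃u v⦄, (ransGraph (.node a b c)).Adj u v → potential2 u ≤ potential2 v + 1 := by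
  have le_one_emb1 (x : Vtx a) : potential2 (emb1 x : Vtx (.node a b c)) ≤ 1 := by
    rcases x with i | p <;> [fin_cases i; skip] <;> simp [potential2, emb1]
  have le_one_emb3 (x : Vtx c) : potential2 (emb3 x : Vtx (.node a b c)) ≤ 1 := by
    rcases x with i | p <;> [fin_cases i; skip] <;> simp [potential2, emb3]
  refine ransGraph_node_le_add_one_of_adj (fun x y _ => ?_) (fun x y h => ?_) (fun x y _ => ?_)
  · have := le_one_emb1 x; omega
  · rw [potential2_emb2, potential2_emb2, add_assoc, add_le_add_iff_left]
    exact h.distToTriple_le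
  · have := le_one_emb3 x; omega

lemma potential3_le_add_one_of_adj :
    ∀ ⦃u v⦄, (ransGraph (.node a b c)).Adj u v → potential3 u ≤ potential3 v + 1 := by
  have le_one_emb1 (x : Vtx a) : potential3 (emb1 x : Vtx (.node a b c)) ≤ 1 := by
    rcases x with i | p <;> [fin_cases i; skip] <;> simp [potential3, emb1]
  have le_one_emb2 (x : Vtx b) : potential3 (emb2 x : Vtx (.node a b c)) ≤ 1 := by
    rcases x with i | p <;> [fin_cases i; skip] <;> simp [potential3, emb2]
  refine ransGraph_node_le_add_one_of_adj (fun x y _ => ?_) (fun x y _ => ?_) (fun x y h => ?_)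
  · have := le_one_emb1 x; omega
  · have := le_one_emb2 x; omega
  · rw [potential3_emb3, potential3_emb3, add_assoc, add_le_add_iff_left]
    exact h.distToTriple_le

end Potential

section Distance

variable {a b c : Tern}

lemma ransGraph_dist_emb1_inl_zero (x : Vtx a) :
    (ransGraph (.node a b c)).dist (emb1 x) (.inl 0) = 1 + distToTriple (ransGraph a) Sum.inl x :=
  (ransGraph_connected a).dist_eq_one_add_distToTriple emb1Hom ransGraph_adj_emb1_inl
    potential1_le_add_one_of_adj potential1_emb1 rfl x

lemma ransGraph_dist_emb2_inl_one (x : Vtx b) :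
    (ransGraph (.node a b c)).dist (emb2 x) (.inl 1) = 1 + distToTriple (ransGraph b) Sum.inl x :=
  (ransGraph_connected b).dist_eq_one_add_distToTriple emb2Hom ransGraph_adj_emb2_inl
    potential2_le_add_one_of_adj potential2_emb2 rfl x

lemma ransGraph_dist_emb3_inl_two (x : Vtx c) :
    (ransGraph (.node a b c)).dist (emb3 x) (.inl 2) = 1 + distToTriple (ransGraph c) Sum.inl x :=
  (ransGraph_connected c).dist_eq_one_add_distToTriple emb3Hom ransGraph_adj_emb3_inl
    potential3_le_add_one_of_adj potential3_emb3 rfl x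

end Distance

lemma distToTriple_inr_pos {t : Tern} (w : Pos t) :
    0 < distToTriple (ransGraph t) Sum.inl (.inr w) :=
  (ransGraph_connected t).distToTriple_pos fun _ => Sum.inr_ne_inl

/-- In any nonempty RANS, the center is adjacent to all three outermost
vertices, and every internal vertex `w` of the sub-RANS `Sᵢ` has distance at
least 2 to the opposite outermost vertex `Oᵢ`, the distance being exactly
`1 + d(w, O(Sᵢ))` where `O(Sᵢ)` is the set of outermost vertices of `Sᵢ`. -/
theorem center_adjacent_and_subRANS_distance (a b c : Tern) :
    let t := Tern.node a b c
    let center : Vtx t := Sum.inr (Sum.inl ())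
    (∀ i : Fin 3, (ransGraph t).Adj center (Sum.inl i)) ∧
    (∀ w : Pos a,
        2 ≤ (ransGraph t).dist (emb1 (Sum.inr w)) (Sum.inl 0) ∧
        (ransGraph t).dist (emb1 (Sum.inr w)) (Sum.inl 0) =
          1 + min ((ransGraph a).dist (Sum.inr w) (Sum.inl 0))
              (min ((ransGraph a).dist (Sum.inr w) (Sum.inl 1))
                ((ransGraph a).dist (Sum.inr w) (Sum.inl 2)))) ∧
    (∀ w : Pos b,
        2 ≤ (ransGraph t).dist (emb2 (Sum.inr w)) (Sum.inl 1) ∧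
        (ransGraph t).dist (emb2 (Sum.inr w)) (Sum.inl 1) =
          1 + min ((ransGraph b).dist (Sum.inr w) (Sum.inl 0))
              (min ((ransGraph b).dist (Sum.inr w) (Sum.inl 1))
                ((ransGraph b).dist (Sum.inr w) (Sum.inl 2)))) ∧
    (∀ w : Pos c,
        2 ≤ (ransGraph t).dist (emb3 (Sum.inr w)) (Sum.inl 2) ∧
        (ransGraph t).dist (emb3 (Sum.inr w)) (Sum.inl 2) =
          1 + min ((ransGraph c).dist (Sum.inr w) (Sum.inl 0))
              (min ((ransGraph c).dist (Sum.inr w) (Sum.inl 1))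
                ((ransGraph c).dist (Sum.inr w) (Sum.inl 2)))) := by
  intro t center
  refine ⟨ransGraph_adj_center_inl, fun w => ?_, fun w => ?_, fun w => ?_⟩
  · have h := ransGraph_dist_emb1_inl_zero (b := b) (c := c) (.inr w)
    exact ⟨h ▸ Nat.add_le_add_left (distToTriple_inr_pos w) 1, h⟩
  · have h := ransGraph_dist_emb2_inl_one (a := a) (c := c) (.inr w)
    exact ⟨h ▸ Nat.add_le_add_left (distToTriple_inr_pos w) 1, h⟩
  · have h := ransGraph_dist_emb3_inl_two (a := a) (b := b) (.inr w)
    exact ⟨h ▸ Nat.add_le_add_left (distToTriple_inr_pos w) 1, h⟩
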